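/- Let $E$ be an elliptic curve over a field $K$ with $j(E) \neq 0, 1728$, and let $D$ be a $K$-rational divisor of degree $d \geq 1$ on $E$. There exists at most one point $R \in E(K)$ modulo the $d$-torsion subgroup $E(K)[d]$ such that every isomorphism $u$ of $E$ (as a curve over $K$, i.e., composition of a translation with $\pm\mathrm{id}$) satisfying $u(D) \sim D$ is of the form $\tau_P$ or $(-\mathrm{id}) \circ \tau_{R+P}$ with $P \in E(K)[d]$. -/

import Mathlib

noncomputable section

variable {K : Type*} [Field K]

open scoped Classical

/-- A divisor on an elliptic curve `E/K`, supported on `K`-rational points. -/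
abbrev EllDiv (W : WeierstrassCurve.Affine K) : Type _ := W.Point →₀ ℤ

/-- The degree of a divisor. -/
def divDeg {W : WeierstrassCurve.Affine K} (D : EllDiv W) : ℤ := D.sum fun _ n => n

/-- The sum of the points of a divisor under the group law of `E(K)`. -/
def divPointSum {W : WeierstrassCurve.Affine K} (D : EllDiv W) : W.Point :=
  D.sum fun p n => n • p

/-- Linear equivalence of divisors on an elliptic curve, via Abel–Jacobi. -/
def DivLinEquiv {W : WeierstrassCurve.Affine K} (D D' : EllDiv W) : Prop :=
  divDeg D = divDeg D' ∧ divPointSum D = divPointSum D'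

/-- An element of `Isom_K(E) = E(K) ⋊ {±id}` (valid since `j(E) ≠ 0, 1728`): a pair
`(s, Q)` acting on points by `x ↦ x + Q` if `s = false`, and `x ↦ -(x + Q)` (that is,
`(-id) ∘ τ_Q`) if `s = true`. -/
abbrev EllIsom (W : WeierstrassCurve.Affine K) : Type _ := Bool × W.Point

/-- The action of an isomorphism on a point. -/
def isomAct {W : WeierstrassCurve.Affine K} (u : EllIsom W) (x : W.Point) : W.Point :=
  if u.1 then -(x + u.2) else x + u.2

/-- The pushforward `u(D)` of a divisor under an isomorphism. -/
def isomDiv {W : WeierstrassCurve.Affine K} (u : EllIsom W) (D : EllDiv W) : EllDiv W :=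
  D.mapDomain (isomAct u)

lemma divPointSum_isomDiv {W : WeierstrassCurve.Affine K} (u : EllIsom W) (D : EllDiv W) :
    divPointSum (isomDiv u D) =
      if u.1 then -(divPointSum D + divDeg D • u.2)
      else divPointSum D + divDeg D • u.2 := by
  unfold divPointSum isomDiv divDeg
  rw [Finsupp.sum_mapDomain_index (fun a => zero_smul ℤ a)
      (fun b m₁ m₂ => add_smul m₁ m₂ b)]
  obtain ⟨s, Q⟩ := u
  cases s <;>
    simp only [isomAct, if_true, if_false, Bool.false_eq_true, smul_neg, smul_add,
      Finsupp.sum, ← Finset.sum_smul, ← Finset.sum_add_distrib, ← Finset.sum_neg_distrib]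
  · rw [Finset.sum_add_distrib, Finset.sum_smul]
  · rw [Finset.sum_neg_distrib, Finset.sum_add_distrib, Finset.sum_smul]

/-- Let `E/K` be an elliptic curve with `j(E) ≠ 0, 1728` and `D` a
`K`-rational divisor of degree `d ≥ 1`. There is at most one point `R ∈ E(K)` modulo the
`d`-torsion subgroup `E(K)[d]` such that every isomorphism `u ∈ Isom_K(E)` with
`u(D) ∼ D` is of the form `τ_P` or `(-id) ∘ τ_{R+P}` with `P ∈ E(K)[d]`; moreover such an
`R` exists. -/
theorem stmt4 (W : WeierstrassCurve K) [W.IsElliptic]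
    (hj0 : W.j ≠ 0) (hj1728 : W.j ≠ 1728) (d : ℕ) (hd : 1 ≤ d)
    (D : EllDiv W.toAffine) (hdeg : divDeg D = d) :
    ∃ R : W.toAffine.Point,
      (∀ u : EllIsom W.toAffine, DivLinEquiv (isomDiv u D) D →
        ∃ P : W.toAffine.Point, d • P = 0 ∧
          ((u.1 = false ∧ u.2 = P) ∨ (u.1 = true ∧ u.2 = R + P))) ∧
      ∀ R' : W.toAffine.Point,
        (∀ u : EllIsom W.toAffine, DivLinEquiv (isomDiv u D) D →
          ∃ P : W.toAffine.Point, d • P = 0 ∧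
            ((u.1 = false ∧ u.2 = P) ∨ (u.1 = true ∧ u.2 = R' + P))) →
        (∃ u : EllIsom W.toAffine, DivLinEquiv (isomDiv u D) D ∧ u.1 = true) →
        d • (R - R') = 0 := by
  set S := divPointSum D with hS
  -- from a `true` isomorphism with linear equivalence, extract `(d:ℤ) • Q = -S - S`
  have key : ∀ Q : W.toAffine.Point, DivLinEquiv (isomDiv (true, Q) D) D →
      (d : ℤ) • Q = -S - S := by
    intro Q h
    have hsum := h.2
    rw [divPointSum_isomDiv, hdeg] at hsum
    simp only [if_true] at hsum
    have h1 : S + (d : ℤ) • Q = -S := neg_eq_iff_eq_neg.mp hsum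
    rw [eq_sub_iff_add_eq', h1]
  have keyF : ∀ Q : W.toAffine.Point, DivLinEquiv (isomDiv (false, Q) D) D →
      (d : ℤ) • Q = 0 := by
    intro Q h
    have hsum := h.2
    rw [divPointSum_isomDiv, hdeg] at hsum
    simp only [Bool.false_eq_true, if_false] at hsum
    exact (add_eq_left).mp hsum
  by_cases hex : ∃ Q : W.toAffine.Point, (d : ℤ) • Q = -S - S
  · obtain ⟨Q0, hQ0⟩ := hex
    refine ⟨Q0, ?_, ?_⟩
    · rintro ⟨s, Q⟩ h
      cases s
      · refine ⟨Q, ?_, Or.inl ⟨rfl, rfl⟩⟩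
        rw [← natCast_zsmul]
        exact keyF Q h
      · refine ⟨Q - Q0, ?_, Or.inr ⟨rfl, (add_sub_cancel Q0 Q).symm⟩⟩
        rw [← natCast_zsmul, smul_sub, key Q h, hQ0, sub_self]
    · rintro R' hR' ⟨⟨s, Q⟩, hu, hs⟩
      simp only at hs; subst hs
      obtain ⟨P, hP, hcase⟩ := hR' (true, Q) hu
      rcases hcase with ⟨hfalse, -⟩ | ⟨-, hQ⟩
      · exact absurd hfalse (by simp)
      · have hdQ : (d : ℤ) • Q = -S - S := key Q hu
        rw [← natCast_zsmul, smul_sub, natCast_zsmul, natCast_zsmul]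
        have : d • Q = d • R' + d • P := by rw [show Q = R' + P from hQ, smul_add]
        rw [hP, add_zero] at this
        have hQ0d : d • Q0 = d • Q := by
          rw [← natCast_zsmul, ← natCast_zsmul, hQ0, hdQ]
        rw [hQ0d, this, sub_self]
  · refine ⟨0, ?_, ?_⟩
    · rintro ⟨s, Q⟩ h
      cases s
      · refine ⟨Q, ?_, Or.inl ⟨rfl, rfl⟩⟩
        rw [← natCast_zsmul]
        exact keyF Q h
      · exact absurd ⟨Q, key Q h⟩ hex
    · rintro R' - ⟨⟨s, Q⟩, hu, hs⟩
      simp only at hs; subst hs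
      exact absurd ⟨Q, key Q hu⟩ hex


end
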